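/- arXiv:2103.10660 — 2 statements merged into one kernel-verified Lean document; each statement's English description precedes it below -/
import Mathlib

section
/- For every n ∈ ℤ and integers i ≥ 1, k ≥ 1 and 1 ≤ j ≤ k−1, the events {A_n = i} and {A_{n+k} = j} are independent; in particular Pr[A_n = i, A_{n+k} = j] = (Σ_{r=0}^{L} C(L,r) w_r^2 (1−w_r)^{i−1}) · (Σ_{r=0}^{L} C(L,r) w_r^2 (1−w_r)^{j−1}). -/
open MeasureTheory ProbabilityTheory Finset

/-!
The event `{A n = i}` is the disjoint union over the value `x` of `b n` of the "rectangles"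
`b (n - i) = x`, `b m ≠ x` for `n - i < m < n`, `b n = x`; by independence each has probability
`P(x)² (1 - P(x))^(i - 1)`, and grouping the `x` by their number of ones gives the binomial sums.
The event depends only on the blocks with indices in `[n - i, n]`, and since `j < k` the windows
`[n - i, n]` and `[n + k - j, n + k]` are disjoint, so the two events are independent.
-/

lemma Nat.sInf_setOf_one_le_and_eq_iff {P : ℕ → Prop} {i : ℕ} (hi : 1 ≤ i) :
    sInf {m | 1 ≤ m ∧ P m} = i ↔ P i ∧ ∀ m, 1 ≤ m → m < i → ¬ P m := by
  constructor
  · intro h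
    have hne : {m | 1 ≤ m ∧ P m}.Nonempty := by
      by_contra hempty
      rw [Set.not_nonempty_iff_eq_empty.1 hempty, Nat.sInf_empty] at h
      omega
    have hmem := Nat.sInf_mem hne
    rw [h] at hmem
    refine ⟨hmem.2, fun m hm hmi hPm => ?_⟩
    exact Nat.notMem_of_lt_sInf (s := {m | 1 ≤ m ∧ P m}) (by rwa [h]) ⟨hm, hPm⟩
  · rintro ⟨hPi, hmin⟩
    refine le_antisymm (Nat.sInf_le ⟨hi, hPi⟩) (le_csInf ⟨i, hi, hPi⟩ ?_)
    rintro m ⟨hm, hPm⟩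
    by_contra! hlt
    exact hmin m hm hlt hPm

lemma Fintype.sum_bool_fun_card_eq_sum_choose {α M : Type*} [Fintype α] [DecidableEq α]
    [AddCommMonoid M] (f : ℕ → M) :
    ∑ x : α → Bool, f #{a | x a = true} =
      ∑ r ∈ range (Fintype.card α + 1), (Fintype.card α).choose r • f r := by
  let e : (α → Bool) ≃ Finset α :=
    { toFun x := {a | x a = true}
      invFun s a := decide (a ∈ s)
      left_inv x := by ext; simp
      right_inv s := by ext; simp }
  rw [Fintype.sum_equiv e (fun x => f #{a | x a = true}) (fun s => f #s) (fun _ => rfl),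
    ← powerset_univ, sum_powerset_apply_card, card_univ]

lemma ENNReal.ofReal_sq_mul_one_sub_pow {a : ℝ} (h0 : 0 ≤ a) (h1 : a ≤ 1) (k : ℕ) :
    ENNReal.ofReal a ^ 2 * (1 - ENNReal.ofReal a) ^ k = ENNReal.ofReal (a ^ 2 * (1 - a) ^ k) := by
  rw [ENNReal.ofReal_mul (by positivity), ENNReal.ofReal_pow h0,
    ENNReal.ofReal_pow (sub_nonneg.2 h1), ENNReal.ofReal_sub _ h0, ENNReal.ofReal_one]

section ReturnTime

variable {Ω β : Type*}

noncomputable def returnTime (b : ℤ → Ω → β) (n : ℤ) (ω : Ω) : ℕ :=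
  sInf {m : ℕ | 1 ≤ m ∧ b (n - m) ω = b n ω}

def returnPattern (x : β) (n : ℤ) (i : ℕ) (m : ℤ) : Set β :=
  if m = n - i ∨ m = n then {x} else {x}ᶜ

lemma returnTime_eq_iff (b : ℤ → Ω → β) (n : ℤ) {i : ℕ} (hi : 1 ≤ i) (ω : Ω) :
    returnTime b n ω = i ↔ ∃ x, ∀ m ∈ Icc (n - i) n, b m ω ∈ returnPattern x n i m := by
  rw [returnTime, Nat.sInf_setOf_one_le_and_eq_iff hi]
  constructor
  · rintro ⟨hret, hmin⟩
    refine ⟨b n ω, fun m hm => ?_⟩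
    rw [mem_Icc] at hm
    unfold returnPattern
    split_ifs with hend
    · rcases hend with rfl | rfl
      exacts [hret, rfl]
    · have hm' := hmin (n - m).toNat (by omega) (by omega)
      rwa [Int.toNat_of_nonneg (by omega), sub_sub_cancel] at hm'
  · rintro ⟨x, hx⟩
    have hn : b n ω = x := by simpa [returnPattern] using hx n (by simp)
    have hni : b (n - i) ω = x := by simpa [returnPattern] using hx (n - i) (by simp)
    refine ⟨hni.trans hn.symm, fun m hm hmi hret => ?_⟩
    have hnm := hx (n - m) (by simp; omega)
    rw [returnPattern, if_neg (by omega)] at hnm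
    exact hnm (hret.trans hn)

lemma setOf_returnTime_eq (b : ℤ → Ω → β) (n : ℤ) {i : ℕ} (hi : 1 ≤ i) :
    {ω | returnTime b n ω = i} =
      ⋃ x, ⋂ m ∈ Icc (n - i) n, b m ⁻¹' returnPattern x n i m := by
  ext ω
  simp [returnTime_eq_iff b n hi]

variable [MeasurableSpace β] [MeasurableSingletonClass β]

lemma measurableSet_returnPattern (x : β) (n : ℤ) (i : ℕ) (m : ℤ) :
    MeasurableSet (returnPattern x n i m) := by
  unfold returnPattern
  split_ifs
  exacts [measurableSet_singleton x, (measurableSet_singleton x).compl]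

lemma measurableSet_returnTime_eq [Countable β]
    (b : ℤ → Ω → β) (n : ℤ) {i : ℕ} (hi : 1 ≤ i) :
    MeasurableSet[⨆ m ∈ (Icc (n - i) n : Set ℤ), ‹MeasurableSpace β›.comap (b m)]
      {ω | returnTime b n ω = i} := by
  rw [setOf_returnTime_eq b n hi]
  refine MeasurableSet.iUnion fun x => MeasurableSet.biInter (Set.to_countable _) fun m hm => ?_
  have hle : ‹MeasurableSpace β›.comap (b m) ≤
      ⨆ m ∈ (Icc (n - i) n : Set ℤ), ‹MeasurableSpace β›.comap (b m) :=
    le_biSup (fun m => ‹MeasurableSpace β›.comap (b m)) (mem_coe.2 hm)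
  exact hle _ ⟨_, measurableSet_returnPattern x n i m, rfl⟩

variable [MeasurableSpace Ω]

lemma measure_returnTime_eq_inter_returnTime_eq [Countable β]
    {μ : Measure Ω} {b : ℤ → Ω → β} (hb : ∀ m, Measurable (b m))
    (hindep : iIndepFun b μ)
    {n n' : ℤ} {i j : ℕ} (hi : 1 ≤ i) (hj : 1 ≤ j) (hsep : n < n' - j) :
    μ ({ω | returnTime b n ω = i} ∩ {ω | returnTime b n' ω = j}) =
      μ {ω | returnTime b n ω = i} * μ {ω | returnTime b n' ω = j} := by
  have hdisj : Disjoint (Icc (n - i) n : Set ℤ) (Icc (n' - j) n') := by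
    rw [Set.disjoint_left]
    intro m h1 h2
    simp only [coe_Icc, Set.mem_Icc] at h1 h2
    omega
  have hwindows := indep_iSup_of_disjoint (fun m => (hb m).comap_le)
    ((iIndepFun_iff_iIndep _ _ _).1 hindep) hdisj
  exact (Indep_iff _ _ _).1 hwindows _ _
    (measurableSet_returnTime_eq b n hi) (measurableSet_returnTime_eq b n' hj)

variable {μ : Measure Ω} [IsProbabilityMeasure μ]
  {b : ℤ → Ω → β} {q : β → ENNReal}

lemma measure_preimage_returnPattern (hb : ∀ m, Measurable (b m))
    (hq : ∀ m x, μ (b m ⁻¹' {x}) = q x) (x : β) (n : ℤ) (i : ℕ) (m : ℤ) :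
    μ (b m ⁻¹' returnPattern x n i m) = if m = n - i ∨ m = n then q x else 1 - q x := by
  unfold returnPattern
  split_ifs
  · exact hq m x
  · rw [Set.preimage_compl, prob_compl_eq_one_sub (hb m (measurableSet_singleton x)), hq]

lemma measure_biInter_preimage_returnPattern (hb : ∀ m, Measurable (b m))
    (hindep : iIndepFun b μ) (hq : ∀ m x, μ (b m ⁻¹' {x}) = q x) (x : β) (n : ℤ) {i : ℕ}
    (hi : 1 ≤ i) :
    μ (⋂ m ∈ Icc (n - i) n, b m ⁻¹' returnPattern x n i m) =
      q x ^ 2 * (1 - q x) ^ (i - 1) := by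
  have hsplit : Icc (n - i) n = insert (n - i) (insert n (Ioo (n - i) n)) := by
    ext m
    simp only [mem_Icc, mem_insert, mem_Ioo]
    omega
  have hinner : ∀ m ∈ Ioo (n - i) n, μ (b m ⁻¹' returnPattern x n i m) = 1 - q x := by
    intro m hm
    rw [mem_Ioo] at hm
    rw [measure_preimage_returnPattern hb hq, if_neg (by omega)]
  rw [hindep.measure_inter_preimage_eq_mul _ fun m _ => measurableSet_returnPattern x n i m,
    hsplit, prod_insert (by simp; omega), prod_insert (by simp), prod_congr rfl hinner, prod_const,
    Int.card_Ioo, measure_preimage_returnPattern hb hq, measure_preimage_returnPattern hb hq,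
    if_pos (Or.inl rfl), if_pos (Or.inr rfl), show (n - (n - i) - 1).toNat = i - 1 by omega]
  ring

lemma measure_returnTime_eq [Fintype β] (hb : ∀ m, Measurable (b m))
    (hindep : iIndepFun b μ) (hq : ∀ m x, μ (b m ⁻¹' {x}) = q x) (n : ℤ) {i : ℕ}
    (hi : 1 ≤ i) :
    μ {ω | returnTime b n ω = i} = ∑ x, q x ^ 2 * (1 - q x) ^ (i - 1) := by
  have hval : ∀ x, ∀ ω ∈ ⋂ m ∈ Icc (n - i) n, b m ⁻¹' returnPattern x n i m,
      b n ω = x := by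
    intro x ω hω
    simpa [returnPattern] using Set.mem_iInter₂.1 hω n (by simp)
  rw [setOf_returnTime_eq b n hi, measure_iUnion, tsum_fintype]
  · exact sum_congr rfl fun x _ => measure_biInter_preimage_returnPattern hb hindep hq x n hi
  · exact fun x y hxy => Set.disjoint_left.2 fun ω hx hy =>
      hxy ((hval x ω hx).symm.trans (hval y ω hy))
  · exact fun x => MeasurableSet.biInter (Set.to_countable _) fun m _ =>
      hb m (measurableSet_returnPattern x n i m)

end ReturnTime

lemma measure_returnTime_eq_ofReal_sum_choose {Ω : Type*} [MeasurableSpace Ω] {μ : Measure Ω}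
    [IsProbabilityMeasure μ] {L : ℕ} {b : ℤ → Ω → (Fin L → Bool)} {w : ℕ → ℝ}
    (hb : ∀ m, Measurable (b m)) (hindep : iIndepFun b μ)
    (hq : ∀ m x, μ (b m ⁻¹' {x}) = ENNReal.ofReal (w #{l | x l = true}))
    (hw0 : ∀ r, 0 ≤ w r) (hw1 : ∀ r, w r ≤ 1) (n : ℤ) {i : ℕ} (hi : 1 ≤ i) :
    μ {ω | returnTime b n ω = i} = ENNReal.ofReal
      (∑ r ∈ range (L + 1), (L.choose r : ℝ) * w r ^ 2 * (1 - w r) ^ (i - 1)) := by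
  rw [measure_returnTime_eq hb hindep hq n hi]
  simp_rw [ENNReal.ofReal_sq_mul_one_sub_pow (hw0 _) (hw1 _)]
  rw [Fintype.sum_bool_fun_card_eq_sum_choose
      (fun r => ENNReal.ofReal (w r ^ 2 * (1 - w r) ^ (i - 1))),
    Fintype.card_fin, ENNReal.ofReal_sum_of_nonneg fun r _ => ?_]
  · refine sum_congr rfl fun r _ => ?_
    rw [nsmul_eq_mul, mul_assoc, ENNReal.ofReal_mul (Nat.cast_nonneg _), ENNReal.ofReal_natCast]
  · exact mul_nonneg (by positivity) (pow_nonneg (sub_nonneg.2 (hw1 r)) _)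

theorem stmt2_general
    {Ω : Type*} [MeasurableSpace Ω] (μ : Measure Ω) [IsProbabilityMeasure μ]
    (p : ℝ) (hp0 : 0 < p) (hp1 : p < 1) (L : ℕ)
    (b : ℤ → Ω → (Fin L → Bool)) (hb : ∀ n, Measurable (b n))
    (hindep : iIndepFun b μ)
    (hdist : ∀ (n : ℤ) (x : Fin L → Bool),
      μ (b n ⁻¹' {x}) =
        ENNReal.ofReal
          (p ^ (Finset.univ.filter fun i => x i = true).card *
            (1 - p) ^ (L - (Finset.univ.filter fun i => x i = true).card)))
    (A : ℤ → Ω → ℕ)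
    (hA : ∀ n ω, A n ω = sInf {m : ℕ | 1 ≤ m ∧ b (n - (m : ℤ)) ω = b n ω})
    (w : ℕ → ℝ) (hw : ∀ r, w r = p ^ r * (1 - p) ^ (L - r)) :
    ∀ (n : ℤ) (i k j : ℕ), 1 ≤ i → 1 ≤ k → 1 ≤ j → j ≤ k - 1 →
      (μ ({ω | A n ω = i} ∩ {ω | A (n + (k : ℤ)) ω = j}) =
        μ {ω | A n ω = i} * μ {ω | A (n + (k : ℤ)) ω = j}) ∧
      (μ ({ω | A n ω = i} ∩ {ω | A (n + (k : ℤ)) ω = j}) =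
        ENNReal.ofReal
          ((∑ r ∈ Finset.range (L + 1),
              (L.choose r : ℝ) * (w r) ^ 2 * (1 - w r) ^ (i - 1)) *
           (∑ r ∈ Finset.range (L + 1),
              (L.choose r : ℝ) * (w r) ^ 2 * (1 - w r) ^ (j - 1)))) := by
  intro n i k j hi hk hj hjk
  obtain rfl : A = returnTime b := funext fun n => funext (hA n)
  have hw0 : ∀ r, 0 ≤ w r := fun r => by
    rw [hw]
    exact mul_nonneg (pow_nonneg hp0.le _) (pow_nonneg (by linarith) _)
  have hw1 : ∀ r, w r ≤ 1 := fun r => by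
    rw [hw]
    exact mul_le_one₀ (pow_le_one₀ hp0.le hp1.le) (pow_nonneg (by linarith) _)
      (pow_le_one₀ (by linarith) (by linarith))
  have hq : ∀ m x, μ (b m ⁻¹' {x}) = ENNReal.ofReal (w #{l | x l = true}) := fun m x => by
    rw [hdist, hw]
  have hmarg := measure_returnTime_eq_ofReal_sum_choose hb hindep hq hw0 hw1
  have hindep_events := measure_returnTime_eq_inter_returnTime_eq hb hindep hi hj
    (show n < n + k - j by omega)
  refine ⟨hindep_events, ?_⟩
  rw [hindep_events, hmarg n hi, hmarg _ hj, ← ENNReal.ofReal_mul (sum_nonneg fun r _ => ?_)]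
  exact mul_nonneg (by positivity) (pow_nonneg (sub_nonneg.2 (hw1 r)) _)

/-- For every `n : ℤ` and integers `i ≥ 1`, `k ≥ 1` and `1 ≤ j ≤ k-1`,
the events `{A n = i}` and `{A (n+k) = j}` are independent; in particular the joint
probability equals the product of the two sums. -/
theorem stmt2
    {Ω : Type*} [MeasurableSpace Ω] (μ : Measure Ω) [IsProbabilityMeasure μ]
    (p : ℝ) (hp0 : 0 < p) (hp1 : p < 1) (L : ℕ) (hL : 1 ≤ L)
    (b : ℤ → Ω → (Fin L → Bool)) (hb : ∀ n, Measurable (b n))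
    (hindep : iIndepFun b μ)
    (hdist : ∀ (n : ℤ) (x : Fin L → Bool),
      μ (b n ⁻¹' {x}) =
        ENNReal.ofReal
          (p ^ (Finset.univ.filter fun i => x i = true).card *
            (1 - p) ^ (L - (Finset.univ.filter fun i => x i = true).card)))
    (A : ℤ → Ω → ℕ)
    (hA : ∀ n ω, A n ω = sInf {m : ℕ | 1 ≤ m ∧ b (n - (m : ℤ)) ω = b n ω})
    (w : ℕ → ℝ) (hw : ∀ r, w r = p ^ r * (1 - p) ^ (L - r)) :
    ∀ (n : ℤ) (i k j : ℕ), 1 ≤ i → 1 ≤ k → 1 ≤ j → j ≤ k - 1 →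
      (μ ({ω | A n ω = i} ∩ {ω | A (n + (k : ℤ)) ω = j}) =
        μ {ω | A n ω = i} * μ {ω | A (n + (k : ℤ)) ω = j}) ∧
      (μ ({ω | A n ω = i} ∩ {ω | A (n + (k : ℤ)) ω = j}) =
        ENNReal.ofReal
          ((∑ r ∈ Finset.range (L + 1),
              (L.choose r : ℝ) * (w r) ^ 2 * (1 - w r) ^ (i - 1)) *
           (∑ r ∈ Finset.range (L + 1),
              (L.choose r : ℝ) * (w r) ^ 2 * (1 - w r) ^ (j - 1)))) :=
  stmt2_general μ p hp0 hp1 L b hb hindep hdist A hA w hw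
end

section
/- For every integer Q ≥ 1 and every integer K ≥ 1, the random variable D_{Q,K} = (1/√K) · Σ_{n=1}^{K} (X_n − X_n^{(Q)}) has finite mean and finite variance; moreover, for each fixed Q, E[D_{Q,K}] → 0 and Var[D_{Q,K}] → 0 as K → ∞. -/
/-!
The error `Y n = X n - X n^(Q)` vanishes unless the recurrence time `A n` exceeds the truncation
level `t = Q + n - 1`, and then it is at most `(A n - t) / log 2`, because `g` has increments at
most `1 / log 2`. By independence and uniformity `P(A n > m) ≤ (1 - 2^(-L))^m`, so
`‖Y n‖₂ = O(q^(n/2))` with `q = 1 - 2^(-L) < 1`. Minkowski's inequality then bounds the partial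
sums `∑_{n ≤ K} Y n` in `L²` uniformly in `K`, whence `‖D Q K‖₂ = O(K^(-1/2))`; convergence to
`0` in `L²` forces both the mean and the variance to `0`.
-/

open MeasureTheory ProbabilityTheory Filter Topology
open scoped ENNReal NNReal

theorem measurable_sInf_setOf_nat {Ω : Type*} [MeasurableSpace Ω] {p : Ω → ℕ → Prop}
    (hp : ∀ k, MeasurableSet {ω | p ω k}) : Measurable fun ω => sInf {k | p ω k} := by
  refine measurable_to_countable' fun k => ?_
  have hchar : ∀ ω, sInf {k | p ω k} = k ↔
      (p ω k ∧ ∀ j < k, ¬ p ω j) ∨ (k = 0 ∧ ∀ j, ¬ p ω j) := by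
    intro ω
    constructor
    · rintro rfl
      by_cases hne : {k | p ω k}.Nonempty
      · exact Or.inl ⟨Nat.sInf_mem hne, fun j hj => Nat.notMem_of_lt_sInf hj⟩
      · exact Or.inr ⟨by simp [Set.not_nonempty_iff_eq_empty.mp hne], fun j hj => hne ⟨j, hj⟩⟩
    · rintro (⟨hk, hbelow⟩ | ⟨rfl, hnone⟩)
      · exact le_antisymm (Nat.sInf_le hk)
          (le_csInf ⟨k, hk⟩ fun j hj => not_lt.mp fun h => hbelow j h hj)
      · simp [hnone]
  have hpre : (fun ω => sInf {k | p ω k}) ⁻¹' {k} =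
      ({ω | p ω k} ∩ ⋂ j ∈ Finset.range k, {ω | p ω j}ᶜ) ∪
        ({ω | k = 0} ∩ ⋂ j, {ω | p ω j}ᶜ) := by
    ext ω; simp [hchar]
  rw [hpre]
  exact ((hp k).inter (.biInter (Finset.range k).countable_toSet fun j _ => (hp j).compl)).union
    ((MeasurableSet.const _).inter (.iInter fun j => (hp j).compl))

theorem measure_forall_ne_eq_pow {Ω ι α : Type*} [MeasurableSpace Ω] {μ : Measure Ω}
    [Fintype α] [MeasurableSpace α] [MeasurableSingletonClass α]
    {b : ι → Ω → α} (hb : ∀ i, Measurable (b i)) (hindep : iIndepFun b μ)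
    (hunif : ∀ i x, μ (b i ⁻¹' {x}) = (Fintype.card α : ℝ≥0∞)⁻¹) {i : ι} {s : Finset ι}
    (hi : i ∉ s) :
    μ {ω | ∀ j ∈ s, b j ω ≠ b i ω} = (1 - (Fintype.card α : ℝ≥0∞)⁻¹) ^ s.card := by
  classical
  have := hindep.isProbabilityMeasure
  have : Nonempty α := (nonempty_of_isProbabilityMeasure μ).map (b i)
  set p : ℝ≥0∞ := (Fintype.card α : ℝ≥0∞)⁻¹
  -- split according to the common value `x` of `b i`
  let F : α → Set Ω := fun x => b i ⁻¹' {x} ∩ ⋂ j ∈ s, b j ⁻¹' {x}ᶜ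
  have hunion : {ω | ∀ j ∈ s, b j ω ≠ b i ω} = ⋃ x, F x := by
    ext ω; simp [F]
  have hF : ∀ x, μ (F x) = p * (1 - p) ^ s.card := by
    intro x
    let sets : ι → Set α := fun j => if j = i then {x} else {x}ᶜ
    have hFx : F x = ⋂ j ∈ insert i s, b j ⁻¹' sets j := by
      rw [Finset.set_biInter_insert]
      simp only [sets, if_pos rfl]
      refine congrArg (b i ⁻¹' {x} ∩ ·) (Set.iInter₂_congr fun j hj => ?_)
      rw [if_neg (ne_of_mem_of_not_mem hj hi)]
    rw [hFx, hindep.measure_inter_preimage_eq_mul _ fun j _ => by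
      unfold sets; split_ifs <;> measurability, Finset.prod_insert hi]
    simp only [sets, if_pos rfl, hunif]
    rw [Finset.prod_congr rfl fun j hj => by rw [if_neg (ne_of_mem_of_not_mem hj hi)]]
    simp [Set.preimage_compl, prob_compl_eq_one_sub ((hb _) (measurableSet_singleton x)), hunif, p]
  have hdisj : Pairwise (Function.onFun Disjoint F) := fun x y hxy =>
    Set.disjoint_left.mpr fun ω hx hy => hxy (hx.1.symm.trans hy.1)
  rw [hunion, measure_iUnion hdisj fun x => ((hb i) (measurableSet_singleton x)).inter
      (.biInter s.countable_toSet fun j _ => (hb j) (measurableSet_singleton x).compl),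
    tsum_fintype, Finset.sum_congr rfl fun x _ => hF x, Finset.sum_const, Finset.card_univ,
    nsmul_eq_mul, ← mul_assoc, ENNReal.mul_inv_cancel (by simp [Fintype.card_ne_zero]) (by simp),
    one_mul]

section RecurrenceTime

variable {Ω α : Type*}

/-- Takes the junk value `sInf ∅ = 0` when no earlier block equals `b n ω`. -/
noncomputable def recurrenceTime (b : ℤ → Ω → α) (n : ℤ) (ω : Ω) : ℕ :=
  sInf {m : ℕ | 1 ≤ m ∧ b (n - (m : ℤ)) ω = b n ω}

theorem measurable_recurrenceTime [MeasurableSpace Ω] [MeasurableSpace α] [MeasurableEq α]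
    {b : ℤ → Ω → α} (hb : ∀ n, Measurable (b n)) (n : ℤ) : Measurable (recurrenceTime b n) :=
  measurable_sInf_setOf_nat fun _ =>
    (MeasurableSet.const _).inter (measurableSet_eq_fun (hb _) (hb n))

theorem recurrenceTime_le {b : ℤ → Ω → α} {n : ℤ} {ω : Ω} {m : ℕ} (hm : 1 ≤ m)
    (h : b (n - m) ω = b n ω) : recurrenceTime b n ω ≤ m :=
  Nat.sInf_le ⟨hm, h⟩

theorem measure_lt_recurrenceTime_le [MeasurableSpace Ω] [Fintype α] [MeasurableSpace α]
    [MeasurableSingletonClass α] {μ : Measure Ω} {b : ℤ → Ω → α} (hb : ∀ n, Measurable (b n))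
    (hindep : iIndepFun b μ) (hunif : ∀ n x, μ (b n ⁻¹' {x}) = (Fintype.card α : ℝ≥0∞)⁻¹)
    (n : ℤ) (m : ℕ) :
    μ {ω | m < recurrenceTime b n ω} ≤ (1 - (Fintype.card α : ℝ≥0∞)⁻¹) ^ m := by
  have hsub : {ω | m < recurrenceTime b n ω} ⊆
      {ω | ∀ j ∈ Finset.Ico (n - m) n, b j ω ≠ b n ω} := by
    intro ω hω j hj hbj
    rw [Finset.mem_Ico] at hj
    have hle : recurrenceTime b n ω ≤ (n - j).toNat :=
      recurrenceTime_le (by omega) (by rwa [Int.toNat_of_nonneg (by omega), sub_sub_cancel])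
    have hlt : m < recurrenceTime b n ω := hω
    omega
  calc μ {ω | m < recurrenceTime b n ω} ≤ _ := measure_mono hsub
    _ = _ := by
      rw [measure_forall_ne_eq_pow hb hindep hunif (by simp), Int.card_Ico, sub_sub_cancel,
        Int.toNat_natCast]

end RecurrenceTime

section Increments

variable {g : ℕ → ℝ} {c : ℝ}

theorem sub_le_mul_of_le_add (hg : ∀ i, g (i + 1) ≤ g i + c) (a d : ℕ) :
    g (a + d) - g a ≤ c * d := by
  induction d with
  | zero => simp
  | succ d ih => rw [← add_assoc]; push_cast; linarith [hg (a + d)]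

theorem sub_ite_le_mul_tsub (hmono : Monotone g) (hg : ∀ i, g (i + 1) ≤ g i + c) (a t : ℕ) :
    0 ≤ g a - (if a ≤ t then g a else g t) ∧
      g a - (if a ≤ t then g a else g t) ≤ c * (a - t : ℕ) := by
  split_ifs with hat
  · simp [Nat.sub_eq_zero_of_le hat]
  · obtain ⟨d, rfl⟩ := Nat.exists_eq_add_of_le (not_le.mp hat).le
    exact ⟨sub_nonneg.mpr (hmono (by omega)), by simpa using sub_le_mul_of_le_add hg t d⟩

end Increments

noncomputable def scaledHarmonic (i : ℕ) : ℝ :=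
  (1 / Real.log 2) * ∑ j ∈ Finset.Icc 1 (i - 1), (1 : ℝ) / j

/-- At `i = 0` both sides equal `0`, using `(0 : ℝ)⁻¹ = 0`. -/
theorem scaledHarmonic_succ (i : ℕ) :
    scaledHarmonic (i + 1) = scaledHarmonic i + (Real.log 2)⁻¹ * (i : ℝ)⁻¹ := by
  cases i with
  | zero => simp [scaledHarmonic]
  | succ k => simp [scaledHarmonic, Finset.sum_Icc_succ_top, mul_add]

theorem monotone_scaledHarmonic : Monotone scaledHarmonic :=
  monotone_nat_of_le_succ fun i => by
    rw [scaledHarmonic_succ]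
    have : 0 < Real.log 2 := Real.log_pos one_lt_two
    exact le_add_of_nonneg_right (by positivity)

theorem scaledHarmonic_succ_le (i : ℕ) :
    scaledHarmonic (i + 1) ≤ scaledHarmonic i + (Real.log 2)⁻¹ := by
  rw [scaledHarmonic_succ]
  have : 0 < Real.log 2 := Real.log_pos one_lt_two
  gcongr
  exact mul_le_of_le_one_right (by positivity) (Nat.cast_inv_le_one i)

theorem ENNReal.tsum_succ_sq_mul_geometric_ne_top {q : ℝ≥0∞} (hq : q < 1) :
    ∑' k : ℕ, ((k : ℝ≥0∞) + 1) ^ 2 * q ^ k ≠ ∞ := by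
  lift q to ℝ≥0 using hq.ne_top
  have hq1 : (q : ℝ) < 1 := by exact_mod_cast hq
  have hnorm : ‖(q : ℝ)‖ < 1 := by rwa [Real.norm_of_nonneg q.coe_nonneg]
  have hreal : Summable fun k : ℕ => ((k : ℝ) + 1) ^ 2 * (q : ℝ) ^ k :=
    (((summable_pow_mul_geometric_of_norm_lt_one 2 hnorm).add
      ((summable_pow_mul_geometric_of_norm_lt_one 1 hnorm).mul_left 2)).add
      (summable_geometric_of_lt_one q.coe_nonneg hq1)).congr fun k => by ring
  have hnn : Summable fun k : ℕ => ((k : ℝ≥0) + 1) ^ 2 * q ^ k :=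
    NNReal.summable_coe.mp (by simpa using hreal)
  simpa using ENNReal.tsum_coe_ne_top_iff_summable.mpr hnn

theorem lintegral_sq_le_of_tail {Ω : Type*} [MeasurableSpace Ω] {μ : Measure Ω} {N : Ω → ℕ}
    (hN : Measurable N) {a q : ℝ≥0∞} (htail : ∀ k, μ {ω | k < N ω} ≤ a * q ^ k) :
    ∫⁻ ω, (N ω : ℝ≥0∞) ^ 2 ∂μ ≤ a * ∑' k : ℕ, ((k : ℝ≥0∞) + 1) ^ 2 * q ^ k := by
  have hlaw : ∫⁻ ω, (N ω : ℝ≥0∞) ^ 2 ∂μ = ∑' k : ℕ, (k : ℝ≥0∞) ^ 2 * μ (N ⁻¹' {k}) := by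
    rw [← lintegral_map (f := fun k : ℕ => (k : ℝ≥0∞) ^ 2) (Measurable.of_discrete) hN,
      lintegral_countable']
    exact tsum_congr fun k => by rw [Measure.map_apply hN (measurableSet_singleton k)]
  rw [hlaw, tsum_eq_zero_add' ENNReal.summable, ← ENNReal.tsum_mul_left]
  simp only [Nat.cast_zero, zero_pow two_ne_zero, zero_mul, zero_add, Nat.cast_succ]
  refine ENNReal.tsum_le_tsum fun k => ?_
  calc ((k : ℝ≥0∞) + 1) ^ 2 * μ (N ⁻¹' {k + 1})
      ≤ ((k : ℝ≥0∞) + 1) ^ 2 * (a * q ^ k) := by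
        gcongr
        exact (measure_mono fun ω (hω : N ω = k + 1) => show k < N ω by omega).trans (htail k)
    _ = a * (((k : ℝ≥0∞) + 1) ^ 2 * q ^ k) := by ring

section L2

variable {Ω E : Type*} [MeasurableSpace Ω] {μ : Measure Ω} [NormedAddCommGroup E]

theorem eLpNorm_two_sq_eq_lintegral (f : Ω → E) :
    eLpNorm f 2 μ ^ 2 = ∫⁻ ω, ‖f ω‖ₑ ^ 2 ∂μ := by
  simpa using eLpNorm_nnreal_pow_eq_lintegral (f := f) (μ := μ) (p := 2) two_ne_zero

theorem eLpNorm_natCast_two_le_of_tail {N : Ω → ℕ} (hN : Measurable N) {q : ℝ≥0∞} {n : ℕ}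
    (htail : ∀ k, μ {ω | k < N ω} ≤ q ^ (n + k)) :
    eLpNorm (fun ω => (N ω : ℝ)) 2 μ ≤
      (∑' k : ℕ, ((k : ℝ≥0∞) + 1) ^ 2 * q ^ k) ^ (2⁻¹ : ℝ) * (q ^ (2⁻¹ : ℝ)) ^ n := by
  rw [← ENNReal.rpow_mul_natCast, mul_comm (2⁻¹ : ℝ), ENNReal.rpow_natCast_mul,
    ← ENNReal.mul_rpow_of_nonneg _ _ (by norm_num), ENNReal.le_rpow_inv_iff two_pos,
    ENNReal.rpow_two, eLpNorm_two_sq_eq_lintegral, mul_comm]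
  simpa using lintegral_sq_le_of_tail hN fun k => (htail k).trans_eq (pow_add q n k)

theorem eLpNorm_sum_le_of_le_geometric {p : ℝ≥0∞} (hp : 1 ≤ p) {Y : ℕ → Ω → E}
    (hY : ∀ n, AEStronglyMeasurable (Y n) μ) {C r : ℝ≥0∞}
    (hbound : ∀ n, eLpNorm (Y n) p μ ≤ C * r ^ n) (s : Finset ℕ) :
    eLpNorm (∑ n ∈ s, Y n) p μ ≤ C * (1 - r)⁻¹ :=
  calc eLpNorm (∑ n ∈ s, Y n) p μ ≤ ∑ n ∈ s, eLpNorm (Y n) p μ :=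
        eLpNorm_sum_le (fun n _ => hY n) hp
    _ ≤ ∑ n ∈ s, C * r ^ n := Finset.sum_le_sum fun n _ => hbound n
    _ ≤ ∑' n, C * r ^ n := ENNReal.sum_le_tsum s
    _ = C * (1 - r)⁻¹ := by rw [ENNReal.tsum_mul_left, ENNReal.tsum_geometric]

theorem tendsto_eLpNorm_inv_sqrt_smul [NormedSpace ℝ E] {p M : ℝ≥0∞} (hM : M ≠ ∞)
    {S : ℕ → Ω → E} (hS : ∀ K, eLpNorm (S K) p μ ≤ M) :
    Tendsto (fun K : ℕ => eLpNorm ((Real.sqrt K)⁻¹ • S K) p μ) atTop (𝓝 0) := by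
  have hinv : Tendsto (fun K : ℕ => ENNReal.ofReal (Real.sqrt K)⁻¹) atTop (𝓝 0) := by
    simpa using ENNReal.tendsto_ofReal
      (tendsto_inv_atTop_zero.comp (Real.tendsto_sqrt_atTop.comp tendsto_natCast_atTop_atTop))
  refine tendsto_of_tendsto_of_tendsto_of_le_of_le tendsto_const_nhds
    (by simpa using ENNReal.Tendsto.mul_const hinv (Or.inr hM)) (fun _ => zero_le) fun K => ?_
  rw [eLpNorm_const_smul, Real.enorm_of_nonneg (by positivity)]
  gcongr
  exact hS K

variable [IsProbabilityMeasure μ] {ι : Type*} {l : Filter ι}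

theorem tendsto_integral_of_tendsto_eLpNorm_two [NormedSpace ℝ E] {Z : ι → Ω → E}
    (hZ : ∀ i, AEStronglyMeasurable (Z i) μ)
    (h : Tendsto (fun i => eLpNorm (Z i) 2 μ) l (𝓝 0)) :
    Tendsto (fun i => ∫ ω, Z i ω ∂μ) l (𝓝 0) := by
  have hint : ∀ᶠ i in l, Integrable (Z i) μ :=
    (h.eventually (gt_mem_nhds ENNReal.zero_lt_top)).mono fun i hi =>
      MemLp.integrable one_le_two ⟨hZ i, hi⟩
  have hL1 : Tendsto (fun i => eLpNorm (Z i - 0) 1 μ) l (𝓝 0) :=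
    tendsto_of_tendsto_of_tendsto_of_le_of_le tendsto_const_nhds h (fun _ => zero_le)
      fun i => by simpa using eLpNorm_le_eLpNorm_of_exponent_le one_le_two (hZ i)
  simpa using tendsto_integral_of_L1' 0 aestronglyMeasurable_zero hint hL1

theorem tendsto_variance_of_tendsto_eLpNorm_two {Z : ι → Ω → ℝ}
    (hZ : ∀ i, AEStronglyMeasurable (Z i) μ)
    (h : Tendsto (fun i => eLpNorm (Z i) 2 μ) l (𝓝 0)) :
    Tendsto (fun i => variance (Z i) μ) l (𝓝 0) := by
  have hsq : Tendsto (fun i => eLpNorm (Z i) 2 μ ^ 2) l (𝓝 0) := by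
    simpa [Function.comp_def] using ((ENNReal.continuous_pow 2).tendsto 0).comp h
  have hevar : Tendsto (fun i => evariance (Z i) μ) l (𝓝 0) :=
    tendsto_of_tendsto_of_tendsto_of_le_of_le tendsto_const_nhds hsq (fun _ => zero_le)
      fun i => by
        rw [evariance_def' (hZ i), eLpNorm_two_sq_eq_lintegral]
        exact tsub_le_self
  simpa [Function.comp_def, variance] using
    (ENNReal.tendsto_toReal ENNReal.zero_ne_top).comp hevar

end L2

section Truncation

variable {Ω : Type*} [MeasurableSpace Ω] {μ : Measure Ω} {g : ℕ → ℝ} {c : ℝ}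

theorem measurable_sub_truncation {N : Ω → ℕ} (hN : Measurable N) (t : ℕ) :
    Measurable fun ω => g (N ω) - if N ω ≤ t then g (N ω) else g t :=
  (Measurable.of_discrete (f := fun a => g a - if a ≤ t then g a else g t)).comp hN

theorem eLpNorm_sub_truncation_le (hmono : Monotone g) (hg : ∀ i, g (i + 1) ≤ g i + c)
    {N : Ω → ℕ} (hN : Measurable N) {q : ℝ≥0∞} (htail : ∀ m, μ {ω | m < N ω} ≤ q ^ m)
    (t : ℕ) :
    eLpNorm (fun ω => g (N ω) - if N ω ≤ t then g (N ω) else g t) 2 μ ≤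
      ‖c‖ₑ * (∑' k : ℕ, ((k : ℝ≥0∞) + 1) ^ 2 * q ^ k) ^ (2⁻¹ : ℝ) * (q ^ (2⁻¹ : ℝ)) ^ t := by
  have hexcess : ∀ k, μ {ω | k < N ω - t} ≤ q ^ (t + k) := fun k =>
    (measure_mono fun ω (hω : k < N ω - t) => show t + k < N ω by omega).trans (htail _)
  have hNt : Measurable fun ω => N ω - t :=
    (Measurable.of_discrete (f := fun a : ℕ => a - t)).comp hN
  calc eLpNorm (fun ω => g (N ω) - if N ω ≤ t then g (N ω) else g t) 2 μ
      ≤ eLpNorm (c • fun ω => ((N ω - t : ℕ) : ℝ)) 2 μ := eLpNorm_mono_real fun ω => by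
        obtain ⟨h0, h1⟩ := sub_ite_le_mul_tsub hmono hg (N ω) t
        simpa [Real.norm_of_nonneg h0] using h1
    _ = ‖c‖ₑ * eLpNorm (fun ω => ((N ω - t : ℕ) : ℝ)) 2 μ := eLpNorm_const_smul _ _ _ _
    _ ≤ _ := by
      rw [mul_assoc]
      exact mul_le_mul_right (eLpNorm_natCast_two_le_of_tail hNt hexcess) _

theorem exists_eLpNorm_sum_sub_truncation_le (hmono : Monotone g)
    (hg : ∀ i, g (i + 1) ≤ g i + c) {N : ℕ → Ω → ℕ} (hN : ∀ n, Measurable (N n)) {q : ℝ≥0∞}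
    (hq : q < 1) (htail : ∀ n m, μ {ω | m < N n ω} ≤ q ^ m) {t : ℕ → ℕ} (ht : ∀ n, n ≤ t n) :
    ∃ M ≠ ∞, ∀ s : Finset ℕ, eLpNorm (∑ n ∈ s, fun ω =>
      g (N n ω) - if N n ω ≤ t n then g (N n ω) else g (t n)) 2 μ ≤ M := by
  have hr : q ^ (2⁻¹ : ℝ) < 1 := ENNReal.rpow_lt_one hq (by norm_num)
  refine ⟨_, ?_, eLpNorm_sum_le_of_le_geometric one_le_two
    (fun n => (measurable_sub_truncation (hN n) (t n)).aestronglyMeasurable) fun n =>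
      (eLpNorm_sub_truncation_le hmono hg (hN n) (htail n) (t n)).trans
        (mul_le_mul_right (pow_le_pow_right_of_le_one' hr.le (ht n)) _)⟩
  exact ENNReal.mul_ne_top (ENNReal.mul_ne_top enorm_ne_top (ENNReal.rpow_ne_top_of_nonneg
    (by norm_num) (ENNReal.tsum_succ_sq_mul_geometric_ne_top hq)))
    (ENNReal.inv_ne_top.mpr (tsub_pos_of_lt hr).ne')

end Truncation

theorem stmt19_general
    {Ω : Type*} [MeasurableSpace Ω] (μ : Measure Ω) [IsProbabilityMeasure μ]
    (L : ℕ)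
    (b : ℤ → Ω → (Fin L → Bool)) (hb : ∀ n, Measurable (b n))
    (hindep : iIndepFun b μ)
    (hunif : ∀ (n : ℤ) (x : Fin L → Bool), μ (b n ⁻¹' {x}) = ((2 : ENNReal) ^ L)⁻¹)
    (A : ℤ → Ω → ℕ)
    (hA : ∀ n ω, A n ω = sInf {m : ℕ | 1 ≤ m ∧ b (n - (m : ℤ)) ω = b n ω})
    (g : ℕ → ℝ)
    (hg : ∀ i : ℕ, g i = (1 / Real.log 2) * ∑ j ∈ Finset.Icc 1 (i - 1), (1 : ℝ) / j)
    (X : ℤ → Ω → ℝ) (hX : ∀ n ω, X n ω = g (A n ω))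
    (XQ : ℕ → ℕ → Ω → ℝ)
    (hXQ : ∀ (Q : ℕ) (n : ℕ) (ω : Ω),
      XQ Q n ω =
        if A (n : ℤ) ω ≤ Q + n - 1 then g (A (n : ℤ) ω) else g (Q + n - 1))
    (D : ℕ → ℕ → Ω → ℝ)
    (hD : ∀ (Q K : ℕ) (ω : Ω),
      D Q K ω = (Real.sqrt K)⁻¹ *
        ∑ n ∈ Finset.Icc 1 K, (X (n : ℤ) ω - XQ Q n ω)) :
    ∀ Q : ℕ, 1 ≤ Q →
      (∀ K : ℕ, 1 ≤ K → Integrable (D Q K) μ ∧ evariance (D Q K) μ < ⊤) ∧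
      Tendsto (fun K : ℕ => ∫ ω, D Q K ω ∂μ) atTop (nhds 0) ∧
      Tendsto (fun K : ℕ => variance (D Q K) μ) atTop (nhds 0) := by
  intro Q hQ
  obtain rfl : A = recurrenceTime b := funext fun n => funext (hA n)
  obtain rfl : g = scaledHarmonic := funext hg
  have hunif' : ∀ n x, μ (b n ⁻¹' {x}) = (Fintype.card (Fin L → Bool) : ℝ≥0∞)⁻¹ :=
    fun n x => by simp [hunif]
  obtain ⟨M, hM, hS⟩ := exists_eLpNorm_sum_sub_truncation_le (μ := μ) monotone_scaledHarmonic
    scaledHarmonic_succ_le (fun n => measurable_recurrenceTime hb n)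
    (ENNReal.sub_lt_self ENNReal.one_ne_top one_ne_zero (by simp))
    (fun n => measure_lt_recurrenceTime_le hb hindep hunif' n) (t := fun n => Q + n - 1)
    (fun n => by omega)
  have hDS : ∀ K, D Q K = (Real.sqrt K)⁻¹ • ∑ n ∈ Finset.Icc 1 K, fun ω =>
      scaledHarmonic (recurrenceTime b n ω) - if recurrenceTime b n ω ≤ Q + n - 1
        then scaledHarmonic (recurrenceTime b n ω) else scaledHarmonic (Q + n - 1) :=
    fun K => by ext ω; simp [hD, hX, hXQ]
  have hDm : ∀ K, AEStronglyMeasurable (D Q K) μ := fun K => by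
    rw [hDS]
    exact (Finset.aestronglyMeasurable_sum _ fun (n : ℕ) _ => (measurable_sub_truncation
      (measurable_recurrenceTime hb n) (Q + n - 1)).aestronglyMeasurable).const_smul _
  have hmem : ∀ K, MemLp (D Q K) 2 μ := fun K => ⟨hDm K, by
    rw [hDS, eLpNorm_const_smul]
    exact ENNReal.mul_lt_top enorm_lt_top ((hS _).trans_lt hM.lt_top)⟩
  have hlim : Tendsto (fun K => eLpNorm (D Q K) 2 μ) atTop (𝓝 0) := by
    simpa only [hDS] using tendsto_eLpNorm_inv_sqrt_smul hM fun K => hS (Finset.Icc 1 K)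
  exact ⟨fun K _ => ⟨(hmem K).integrable one_le_two, (hmem K).evariance_lt_top⟩,
    tendsto_integral_of_tendsto_eLpNorm_two hDm hlim,
    tendsto_variance_of_tendsto_eLpNorm_two hDm hlim⟩

/-- For every `Q ≥ 1` and `K ≥ 1`, the random variable
`D Q K = (1/√K) · ∑_{n=1}^K (X n − X n^(Q))` (with the truncated variable
`X n^(Q) = g (A n)` if `A n ≤ Q+n−1` and `g (Q+n−1)` otherwise) has finite mean
and finite variance; moreover, for each fixed `Q`, `E[D Q K] → 0` and
`Var[D Q K] → 0` as `K → ∞`. -/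
theorem stmt19
    {Ω : Type*} [MeasurableSpace Ω] (μ : Measure Ω) [IsProbabilityMeasure μ]
    (L : ℕ) (hL : 1 ≤ L)
    (b : ℤ → Ω → (Fin L → Bool)) (hb : ∀ n, Measurable (b n))
    (hindep : iIndepFun b μ)
    (hunif : ∀ (n : ℤ) (x : Fin L → Bool), μ (b n ⁻¹' {x}) = ((2 : ENNReal) ^ L)⁻¹)
    (A : ℤ → Ω → ℕ)
    (hA : ∀ n ω, A n ω = sInf {m : ℕ | 1 ≤ m ∧ b (n - (m : ℤ)) ω = b n ω})
    (g : ℕ → ℝ)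
    (hg : ∀ i : ℕ, g i = (1 / Real.log 2) * ∑ j ∈ Finset.Icc 1 (i - 1), (1 : ℝ) / j)
    (X : ℤ → Ω → ℝ) (hX : ∀ n ω, X n ω = g (A n ω))
    (XQ : ℕ → ℕ → Ω → ℝ)
    (hXQ : ∀ (Q : ℕ) (n : ℕ) (ω : Ω),
      XQ Q n ω =
        if A (n : ℤ) ω ≤ Q + n - 1 then g (A (n : ℤ) ω) else g (Q + n - 1))
    (D : ℕ → ℕ → Ω → ℝ)
    (hD : ∀ (Q K : ℕ) (ω : Ω),
      D Q K ω = (Real.sqrt K)⁻¹ *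
        ∑ n ∈ Finset.Icc 1 K, (X (n : ℤ) ω - XQ Q n ω)) :
    ∀ Q : ℕ, 1 ≤ Q →
      (∀ K : ℕ, 1 ≤ K → Integrable (D Q K) μ ∧ evariance (D Q K) μ < ⊤) ∧
      Tendsto (fun K : ℕ => ∫ ω, D Q K ω ∂μ) atTop (nhds 0) ∧
      Tendsto (fun K : ℕ => variance (D Q K) μ) atTop (nhds 0) :=
  stmt19_general μ L b hb hindep hunif A hA g hg X hX XQ hXQ D hD
end
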